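/- arXiv:1611.04704 — 4 statements merged into one kernel-verified Lean document; each statement's English description precedes it below -/
import Mathlib

section
/- Let h_a, h_b be independent identically distributed Gamma random variables with shape m ≥ 1 (m a positive integer, or real m ≥ 1) and scale 1/m. Then lim_{θ → 0+} P(h_a < θ h_b) / θ^m = Γ(2m) / (m Γ(m)^2). -/
/-!
Let `F` be the distribution function of `Gamma(a, r)`; independence gives `P(X < θY) = E[F(θY)]`.
On `[0, t]` the density `c x^(a-1) e^(-rx)`, `c = r^a / Γ(a)`, lies between `c x^(a-1) e^(-rt)` and
`c x^(a-1)`, so `F(t)` is squeezed between `c t^a e^(-rt) / a` and `c t^a / a`. Integrated against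
`Gamma(b, s)`, both bounds are again Gamma integrals, giving
`θ^a K / (s + rθ)^(a+b) ≤ P(X < θY) ≤ θ^a K / s^(a+b)` with `K = c s^b Γ(a+b) / (a Γ(b))`,
and the two sides agree as `θ → 0`.
-/

open MeasureTheory ProbabilityTheory Real Filter Set Topology

namespace ProbabilityTheory

lemma measurable_gammaPDF (a r : ℝ) : Measurable (gammaPDF a r) :=
  (measurable_gammaPDFReal a r).ennreal_ofReal

lemma ae_nonneg_gammaMeasure (a r : ℝ) : ∀ᵐ y ∂gammaMeasure a r, 0 ≤ y := by
  have h : gammaMeasure a r (Iio 0) = 0 := by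
    rw [gammaMeasure, withDensity_apply _ measurableSet_Iio, lintegral_gammaPDF_of_nonpos le_rfl]
  rw [ae_iff]
  simp only [not_le]
  exact h

lemma gammaMeasure_Iio_eq_setLIntegral_Ico (a r : ℝ) {t : ℝ} (ht : 0 ≤ t) :
    gammaMeasure a r (Iio t) = ∫⁻ x in Ico 0 t, gammaPDF a r x := by
  rw [gammaMeasure, withDensity_apply _ measurableSet_Iio, ← Iio_union_Ico_eq_Iio ht,
    lintegral_union measurableSet_Ico ((Iio_disjoint_Ici le_rfl).mono_right Ico_subset_Ici_self),
    lintegral_gammaPDF_of_nonpos le_rfl, zero_add]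

lemma setLIntegral_Ico_ofReal_mul_rpow_sub_one {a c t : ℝ} (ha : 0 < a) (hc : 0 ≤ c)
    (ht : 0 ≤ t) :
    ∫⁻ x in Ico 0 t, ENNReal.ofReal (c * x ^ (a - 1)) = ENNReal.ofReal (c * (t ^ a / a)) := by
  have hint : IntegrableOn (fun x : ℝ => c * x ^ (a - 1)) (Ico 0 t) :=
    (((intervalIntegral.intervalIntegrable_rpow' (by linarith)).const_mul c).1).congr_set_ae
      Ico_ae_eq_Ioc
  have hnonneg : 0 ≤ᵐ[volume.restrict (Ico 0 t)] fun x : ℝ => c * x ^ (a - 1) :=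
    (ae_restrict_iff' measurableSet_Ico).mpr
      (ae_of_all _ fun x hx => mul_nonneg hc (rpow_nonneg hx.1 _))
  rw [← ofReal_integral_eq_lintegral_ofReal hint hnonneg, setIntegral_congr_set Ico_ae_eq_Ioc,
    ← intervalIntegral.integral_of_le ht, intervalIntegral.integral_const_mul,
    integral_rpow (Or.inl (by linarith)), sub_add_cancel, zero_rpow ha.ne', sub_zero]

lemma gammaMeasure_Iio_le {a r t : ℝ} (ha : 0 < a) (hr : 0 < r) (ht : 0 ≤ t) :
    gammaMeasure a r (Iio t) ≤ ENNReal.ofReal (r ^ a / Gamma a * (t ^ a / a)) := by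
  have hc : 0 ≤ r ^ a / Gamma a := div_nonneg (rpow_nonneg hr.le a) (Gamma_pos_of_pos ha).le
  rw [gammaMeasure_Iio_eq_setLIntegral_Ico a r ht,
    ← setLIntegral_Ico_ofReal_mul_rpow_sub_one ha hc ht]
  refine setLIntegral_mono' measurableSet_Ico fun x hx => ?_
  rw [gammaPDF_of_nonneg hx.1]
  refine ENNReal.ofReal_le_ofReal (mul_le_of_le_one_right (mul_nonneg hc (rpow_nonneg hx.1 _)) ?_)
  exact exp_le_one_iff.mpr (neg_nonpos.mpr (mul_nonneg hr.le hx.1))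

lemma ofReal_le_gammaMeasure_Iio {a r t : ℝ} (ha : 0 < a) (hr : 0 < r) (ht : 0 ≤ t) :
    ENNReal.ofReal (r ^ a / Gamma a * (t ^ a / a) * exp (-(r * t))) ≤
      gammaMeasure a r (Iio t) := by
  have hc : 0 ≤ r ^ a / Gamma a * exp (-(r * t)) := by
    have := Gamma_pos_of_pos ha
    positivity
  rw [gammaMeasure_Iio_eq_setLIntegral_Ico a r ht, mul_right_comm,
    ← setLIntegral_Ico_ofReal_mul_rpow_sub_one ha hc ht]
  refine setLIntegral_mono' measurableSet_Ico fun x hx => ?_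
  rw [gammaPDF_of_nonneg hx.1, mul_right_comm]
  refine ENNReal.ofReal_le_ofReal (mul_le_mul_of_nonneg_left ?_ ?_)
  · exact exp_le_exp.mpr (neg_le_neg (mul_le_mul_of_nonneg_left hx.2.le hr.le))
  · have := Gamma_pos_of_pos ha
    have := hx.1
    positivity

lemma lintegral_rpow_mul_exp_neg_gammaMeasure {b s p k : ℝ} (hb : 0 < b) (hs : 0 < s)
    (hbp : 0 < b + p) (hsk : 0 < s + k) :
    ∫⁻ y, ENNReal.ofReal (y ^ p * exp (-(k * y))) ∂gammaMeasure b s =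
      ENNReal.ofReal (s ^ b / Gamma b * Gamma (b + p) / (s + k) ^ (b + p)) := by
  have hpdf : ∀ᵐ y, gammaPDF b s y * ENNReal.ofReal (y ^ p * exp (-(k * y))) =
      ENNReal.ofReal (s ^ b / Gamma b * Gamma (b + p) / (s + k) ^ (b + p)) *
        gammaPDF (b + p) (s + k) y := by
    -- `y ^ (b + p - 1) = y ^ (b - 1) * y ^ p` fails at `y = 0`, e.g. for `b = p = 1 / 2`.
    filter_upwards [Measure.ae_ne volume 0] with y hy
    rcases hy.lt_or_gt with hy | hy
    · simp [gammaPDF_of_neg hy]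
    have hΓb := Gamma_pos_of_pos hb
    have hΓbp := Gamma_pos_of_pos hbp
    have hrpow : y ^ (b + p - 1) = y ^ (b - 1) * y ^ p := by
      rw [← rpow_add hy]; ring_nf
    have hexp : exp (-((s + k) * y)) = exp (-(s * y)) * exp (-(k * y)) := by
      rw [← exp_add]; ring_nf
    have := (rpow_pos_of_pos hsk (b + p)).ne'
    rw [gammaPDF_of_nonneg hy.le, gammaPDF_of_nonneg hy.le, ← ENNReal.ofReal_mul (by positivity),
      ← ENNReal.ofReal_mul (by positivity), hrpow, hexp]
    field_simp
  rw [gammaMeasure, lintegral_withDensity_eq_lintegral_mul _ (measurable_gammaPDF b s)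
    (by fun_prop)]
  refine (lintegral_congr_ae hpdf).trans ?_
  rw [lintegral_const_mul _ (measurable_gammaPDF _ _), lintegral_gammaPDF_eq_one hbp hsk, mul_one]

lemma measure_lt_mul_eq_lintegral {Ω : Type*} [MeasurableSpace Ω] {P : Measure Ω}
    [IsFiniteMeasure P] {X Y : Ω → ℝ} (hX : Measurable X) (hY : Measurable Y)
    (hXY : IndepFun X Y P) (θ : ℝ) :
    P {ω | X ω < θ * Y ω} = ∫⁻ y, P.map X (Iio (θ * y)) ∂P.map Y := by
  have hS : MeasurableSet {q : ℝ × ℝ | q.1 < θ * q.2} :=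
    measurableSet_lt measurable_fst (measurable_snd.const_mul θ)
  rw [show {ω | X ω < θ * Y ω} = (fun ω => (X ω, Y ω)) ⁻¹' {q | q.1 < θ * q.2} from rfl,
    ← Measure.map_apply (hX.prodMk hY) hS,
    (indepFun_iff_map_prod_eq_prod_map_map hX.aemeasurable hY.aemeasurable).1 hXY,
    Measure.prod_apply_symm hS]
  rfl

section SmallBall

variable {a r b s θ : ℝ}

lemma lintegral_gammaMeasure_Iio_mul_le (ha : 0 < a) (hr : 0 < r) (hb : 0 < b) (hs : 0 < s)
    (hθ : 0 ≤ θ) :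
    ∫⁻ y, gammaMeasure a r (Iio (θ * y)) ∂gammaMeasure b s ≤
      ENNReal.ofReal (θ ^ a * (r ^ a / Gamma a / a * (s ^ b / Gamma b * Gamma (b + a)))
        / s ^ (b + a)) := by
  have hc : 0 ≤ θ ^ a * (r ^ a / Gamma a / a) := by
    have := Gamma_pos_of_pos ha; positivity
  calc ∫⁻ y, gammaMeasure a r (Iio (θ * y)) ∂gammaMeasure b s
      ≤ ∫⁻ y, ENNReal.ofReal (θ ^ a * (r ^ a / Gamma a / a)) *
          ENNReal.ofReal (y ^ a * exp (-(0 * y))) ∂gammaMeasure b s := by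
        refine lintegral_mono_ae ?_
        filter_upwards [ae_nonneg_gammaMeasure b s] with y hy
        refine (gammaMeasure_Iio_le ha hr (mul_nonneg hθ hy)).trans_eq ?_
        rw [← ENNReal.ofReal_mul hc, mul_rpow hθ hy, zero_mul, neg_zero, exp_zero]
        ring_nf
    _ = _ := by
        rw [lintegral_const_mul' _ _ ENNReal.ofReal_ne_top,
          lintegral_rpow_mul_exp_neg_gammaMeasure hb hs (by linarith) (by linarith),
          ← ENNReal.ofReal_mul hc, add_zero]
        ring_nf

lemma ofReal_le_lintegral_gammaMeasure_Iio_mul (ha : 0 < a) (hr : 0 < r) (hb : 0 < b)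
    (hs : 0 < s) (hθ : 0 ≤ θ) :
    ENNReal.ofReal (θ ^ a * (r ^ a / Gamma a / a * (s ^ b / Gamma b * Gamma (b + a)))
        / (s + r * θ) ^ (b + a)) ≤
      ∫⁻ y, gammaMeasure a r (Iio (θ * y)) ∂gammaMeasure b s := by
  have hc : 0 ≤ θ ^ a * (r ^ a / Gamma a / a) := by
    have := Gamma_pos_of_pos ha; positivity
  calc ENNReal.ofReal (θ ^ a * (r ^ a / Gamma a / a * (s ^ b / Gamma b * Gamma (b + a)))
        / (s + r * θ) ^ (b + a))
      = ∫⁻ y, ENNReal.ofReal (θ ^ a * (r ^ a / Gamma a / a)) *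
          ENNReal.ofReal (y ^ a * exp (-((r * θ) * y))) ∂gammaMeasure b s := by
        rw [lintegral_const_mul' _ _ ENNReal.ofReal_ne_top,
          lintegral_rpow_mul_exp_neg_gammaMeasure hb hs (by linarith) (by positivity),
          ← ENNReal.ofReal_mul hc]
        ring_nf
    _ ≤ _ := by
        refine lintegral_mono_ae ?_
        filter_upwards [ae_nonneg_gammaMeasure b s] with y hy
        refine le_of_eq_of_le ?_ (ofReal_le_gammaMeasure_Iio ha hr (mul_nonneg hθ hy))
        rw [← ENNReal.ofReal_mul hc, mul_rpow hθ hy]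
        ring_nf

end SmallBall

theorem tendsto_measure_lt_mul_div_rpow_of_gamma {Ω : Type*} [MeasurableSpace Ω]
    {P : Measure Ω} [IsProbabilityMeasure P] {X Y : Ω → ℝ} {a r b s : ℝ}
    (ha : 0 < a) (hr : 0 < r) (hb : 0 < b) (hs : 0 < s)
    (hX : Measurable X) (hY : Measurable Y) (hXY : IndepFun X Y P)
    (hXlaw : P.map X = gammaMeasure a r) (hYlaw : P.map Y = gammaMeasure b s) :
    Tendsto (fun θ => (P {ω | X ω < θ * Y ω}).toReal / θ ^ a) (𝓝[>] 0)
      (𝓝 ((r / s) ^ a * Gamma (a + b) / (a * Gamma a * Gamma b))) := by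
  set K := r ^ a / Gamma a / a * (s ^ b / Gamma b * Gamma (b + a)) with hKdef
  have hK : 0 ≤ K := by
    have := Gamma_pos_of_pos ha; have := Gamma_pos_of_pos hb; positivity
  have hlimit : K / s ^ (b + a) = (r / s) ^ a * Gamma (a + b) / (a * Gamma a * Gamma b) := by
    have := (Gamma_pos_of_pos ha).ne'; have := (Gamma_pos_of_pos hb).ne'
    have := (rpow_pos_of_pos hs a).ne'; have := (rpow_pos_of_pos hs b).ne'
    rw [div_rpow hr.le hs.le, rpow_add hs, hKdef, add_comm b a]
    field_simp
  have hP : ∀ θ, P {ω | X ω < θ * Y ω} =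
      ∫⁻ y, gammaMeasure a r (Iio (θ * y)) ∂gammaMeasure b s := fun θ => by
    rw [measure_lt_mul_eq_lintegral hX hY hXY, hXlaw, hYlaw]
  have hlower : ∀ θ > 0, K / (s + r * θ) ^ (b + a) ≤ (P {ω | X ω < θ * Y ω}).toReal / θ ^ a := by
    intro θ hθ
    rw [le_div_iff₀ (rpow_pos_of_pos hθ a), ← ENNReal.ofReal_le_iff_le_toReal
      (measure_ne_top P _), hP]
    refine le_of_eq_of_le ?_ (ofReal_le_lintegral_gammaMeasure_Iio_mul ha hr hb hs hθ.le)
    rw [hKdef]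
    ring_nf
  have hupper : ∀ θ > 0, (P {ω | X ω < θ * Y ω}).toReal / θ ^ a ≤ K / s ^ (b + a) := by
    intro θ hθ
    rw [div_le_iff₀ (rpow_pos_of_pos hθ a)]
    refine ENNReal.toReal_le_of_le_ofReal
      (mul_nonneg (div_nonneg hK (rpow_nonneg hs.le _)) (rpow_nonneg hθ.le _)) ?_
    rw [hP]
    refine (lintegral_gammaMeasure_Iio_mul_le ha hr hb hs hθ.le).trans_eq ?_
    rw [hKdef]
    ring_nf
  have hcont : Tendsto (fun θ => K / (s + r * θ) ^ (b + a)) (𝓝[>] 0) (𝓝 (K / s ^ (b + a))) := by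
    have hs' : s + r * 0 ≠ 0 := by simp [hs.ne']
    have : ContinuousAt (fun θ => K / (s + r * θ) ^ (b + a)) 0 :=
      continuousAt_const.div ((by fun_prop : ContinuousAt (fun θ => s + r * θ) 0).rpow_const
        (Or.inl hs')) (rpow_pos_of_pos (by simpa using hs) _).ne'
    simpa using this.tendsto.mono_left nhdsWithin_le_nhds
  rw [← hlimit]
  exact tendsto_of_tendsto_of_tendsto_of_le_of_le' hcont tendsto_const_nhds
    (eventually_nhdsWithin_of_forall hlower) (eventually_nhdsWithin_of_forall hupper)

end ProbabilityTheory

/-- For i.i.d. h_a, h_b ~ Gamma(m, rate m) with m ≥ 1,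
    lim_{θ→0+} P(h_a < θ h_b)/θ^m = Γ(2m)/(m Γ(m)²). -/
theorem stmt_2 {Ω : Type*} [MeasureSpace Ω] [IsProbabilityMeasure (ℙ : Measure Ω)]
    (m : ℝ) (hm : 1 ≤ m)
    (ha hb : Ω → ℝ) (hmeas_a : Measurable ha) (hmeas_b : Measurable hb)
    (hdist_a : Measure.map ha ℙ = gammaMeasure m m)
    (hdist_b : Measure.map hb ℙ = gammaMeasure m m)
    (hindep : IndepFun ha hb ℙ) :
    Tendsto (fun θ : ℝ => (ℙ {ω | ha ω < θ * hb ω}).toReal / θ ^ m)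
      (nhdsWithin 0 (Set.Ioi 0))
      (nhds (Real.Gamma (2 * m) / (m * Real.Gamma m ^ 2))) := by
  have hm0 : 0 < m := by linarith
  convert tendsto_measure_lt_mul_div_rpow_of_gamma hm0 hm0 hm0 hm0 hmeas_a hmeas_b hindep
    hdist_a hdist_b using 2
  rw [div_self hm0.ne', one_rpow, two_mul]
  ring
end

section
/- Let h be a positive random variable whose CDF F satisfies F(t) ~ C t^m as t → 0+ for some constants C > 0 and m ≥ 1, and let I be a nonnegative random variable, independent of h, with E[I^m] < ∞ and P(I > 0) > 0. Then for any constant c > 0, E[F(θ c I)] ~ C c^m E[I^m] θ^m as θ → 0+. Consequently, the outage probability P(h < θ c I) decays as Θ(θ^m). -/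
open MeasureTheory ProbabilityTheory Real Filter

/-- If the CDF F of the positive r.v. h satisfies F(t) ~ C t^m as t → 0+ (m ≥ 1),
    and I ≥ 0 is independent of h with E[I^m] < ∞ and P(I > 0) > 0, then for c > 0,
    E[F(θ c I)] ~ C c^m E[I^m] θ^m, and hence P(h < θ c I) = Θ(θ^m), as θ → 0+. -/
theorem stmt_9 {Ω : Type*} [MeasureSpace Ω] [IsProbabilityMeasure (ℙ : Measure Ω)]
    (C m c : ℝ) (hC : 0 < C) (hm : 1 ≤ m) (hc : 0 < c)
    (h I : Ω → ℝ) (hhmeas : Measurable h) (hImeas : Measurable I)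
    (hhpos : ∀ᵐ ω ∂ℙ, 0 < h ω) (hInonneg : ∀ ω, 0 ≤ I ω)
    (F : ℝ → ℝ) (hF : ∀ t, F t = (ℙ {ω | h ω ≤ t}).toReal)
    (hFasymp : Tendsto (fun t : ℝ => F t / t ^ m) (nhdsWithin 0 (Set.Ioi 0)) (nhds C))
    (hmom : Integrable (fun ω => I ω ^ m) ℙ)
    (hIpos : 0 < (ℙ {ω | 0 < I ω}).toReal)
    (hindep : IndepFun h I ℙ) :
    Tendsto (fun θ : ℝ => (∫ ω, F (θ * c * I ω)) / θ ^ m)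
        (nhdsWithin 0 (Set.Ioi 0))
        (nhds (C * c ^ m * ∫ ω, I ω ^ m)) ∧
      ∃ c₁ c₂ : ℝ, 0 < c₁ ∧ 0 < c₂ ∧
        ∀ᶠ θ in nhdsWithin (0 : ℝ) (Set.Ioi 0),
          c₁ * θ ^ m ≤ (ℙ {ω | h ω < θ * c * I ω}).toReal ∧
            (ℙ {ω | h ω < θ * c * I ω}).toReal ≤ c₂ * θ ^ m := by
  have hm0 : (0:ℝ) < m := lt_of_lt_of_le one_pos hm
  have hm0' : m ≠ 0 := ne_of_gt hm0
  -- basic properties of F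
  have hFnonneg : ∀ t, 0 ≤ F t := fun t => by rw [hF]; exact ENNReal.toReal_nonneg
  have hFle1 : ∀ t, F t ≤ 1 := fun t => by
    rw [hF]
    have := ENNReal.toReal_mono (by simp) (prob_le_one (μ := (ℙ : Measure Ω))
      (s := {ω | h ω ≤ t}))
    simpa using this
  have hFmono : Monotone F := by
    intro s t hst
    rw [hF, hF]
    exact ENNReal.toReal_mono (measure_ne_top _ _)
      (measure_mono (fun ω hω => le_trans hω hst))
  have hFmeas : Measurable F := hFmono.measurable
  have hP0 : (ℙ : Measure Ω) {ω | h ω ≤ 0} = 0 := by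
    have h1 : (ℙ : Measure Ω) {ω | ¬ 0 < h ω} = 0 := by
      rw [← ae_iff]; exact hhpos
    refine measure_mono_null (fun ω hω => ?_) h1
    exact not_lt.mpr hω
  have hF0 : F 0 = 0 := by rw [hF, hP0]; simp
  -- global bound F t ≤ K t^m for t ≥ 0
  obtain ⟨δ, hδ, hδbound⟩ : ∃ δ > 0, ∀ t : ℝ, 0 < t → t < δ → F t / t ^ m < C + 1 := by
    have hmem : {t : ℝ | F t / t ^ m < C + 1} ∈ nhdsWithin (0:ℝ) (Set.Ioi 0) :=
      hFasymp.eventually (gt_mem_nhds (lt_add_one C))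
    obtain ⟨u, hu, hsub⟩ := mem_nhdsGT_iff_exists_Ioo_subset.mp hmem
    exact ⟨u, hu, fun t ht htu => hsub ⟨ht, htu⟩⟩
  set K : ℝ := (C + 1) + δ⁻¹ ^ m with hKdef
  have hK1 : (0:ℝ) < C + 1 := by linarith
  have hKpos : 0 < K := by
    have h1 : (0:ℝ) ≤ δ⁻¹ ^ m := Real.rpow_nonneg (inv_nonneg.mpr hδ.le) m
    rw [hKdef]; linarith
  have hKbound : ∀ t : ℝ, 0 ≤ t → F t ≤ K * t ^ m := by
    intro t ht
    rcases eq_or_lt_of_le ht with h0 | h0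
    · rw [← h0, hF0, Real.zero_rpow hm0', mul_zero]
    rcases lt_or_ge t δ with htδ | htδ
    · have htm : (0:ℝ) < t ^ m := Real.rpow_pos_of_pos h0 m
      have := (hδbound t h0 htδ).le
      rw [div_le_iff₀ htm] at this
      have h2 : (0:ℝ) ≤ δ⁻¹ ^ m * t ^ m :=
        mul_nonneg (Real.rpow_nonneg (inv_nonneg.mpr hδ.le) m) htm.le
      calc F t ≤ (C + 1) * t ^ m := this
        _ ≤ K * t ^ m := by rw [hKdef]; nlinarith
    · have h1 : (1:ℝ) ≤ t / δ := (one_le_div hδ).mpr htδ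
      have h2 : (1:ℝ) ≤ (t / δ) ^ m := Real.one_le_rpow h1 hm0.le
      have h3 : (t / δ) ^ m = δ⁻¹ ^ m * t ^ m := by
        rw [div_eq_inv_mul, Real.mul_rpow (inv_nonneg.mpr hδ.le) ht]
      have h4 : F t ≤ δ⁻¹ ^ m * t ^ m := le_trans (hFle1 t) (by rw [← h3]; exact h2)
      have h5 : (0:ℝ) ≤ (C + 1) * t ^ m :=
        mul_nonneg hK1.le (Real.rpow_nonneg ht m)
      calc F t ≤ δ⁻¹ ^ m * t ^ m := h4
        _ ≤ K * t ^ m := by rw [hKdef]; nlinarith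
  have hEnonneg : (0:ℝ) ≤ ∫ ω, I ω ^ m := by
    exact integral_nonneg (fun ω => Real.rpow_nonneg (hInonneg ω) m)
  -- Part 1: dominated convergence
  have part1 : Tendsto (fun θ : ℝ => (∫ ω, F (θ * c * I ω)) / θ ^ m)
      (nhdsWithin 0 (Set.Ioi 0)) (nhds (C * c ^ m * ∫ ω, I ω ^ m)) := by
    have key : Tendsto (fun θ : ℝ => ∫ ω, F (θ * c * I ω) / θ ^ m)
        (nhdsWithin 0 (Set.Ioi 0)) (nhds (∫ ω, C * c ^ m * I ω ^ m)) := by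
      apply tendsto_integral_filter_of_dominated_convergence
        (bound := fun ω => K * c ^ m * I ω ^ m)
      · filter_upwards with θ
        exact ((hFmeas.comp (hImeas.const_mul (θ * c))).div_const _).aestronglyMeasurable
      · filter_upwards [self_mem_nhdsWithin] with θ (hθ : 0 < θ)
        filter_upwards with ω
        have hθm : (0:ℝ) < θ ^ m := Real.rpow_pos_of_pos hθ m
        have harg : 0 ≤ θ * c * I ω := mul_nonneg (mul_nonneg hθ.le hc.le) (hInonneg ω)
        have hnn : 0 ≤ F (θ * c * I ω) / θ ^ m :=
          div_nonneg (hFnonneg _) hθm.le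
        rw [Real.norm_eq_abs, abs_of_nonneg hnn, div_le_iff₀ hθm]
        have : F (θ * c * I ω) ≤ K * (θ * c * I ω) ^ m := hKbound _ harg
        have heq : (θ * c * I ω) ^ m = θ ^ m * (c ^ m * I ω ^ m) := by
          rw [mul_assoc, Real.mul_rpow hθ.le (mul_nonneg hc.le (hInonneg ω)),
            Real.mul_rpow hc.le (hInonneg ω)]
        calc F (θ * c * I ω) ≤ K * (θ * c * I ω) ^ m := this
          _ = K * c ^ m * I ω ^ m * θ ^ m := by rw [heq]; ring
      · exact (hmom.const_mul (K * c ^ m)).congr (by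
          filter_upwards with ω; ring)
      · filter_upwards with ω
        rcases eq_or_lt_of_le (hInonneg ω) with hI0 | hI0
        · have : (fun θ : ℝ => F (θ * c * I ω) / θ ^ m) = fun θ => 0 := by
            funext θ; rw [← hI0, mul_zero, hF0, zero_div]
          rw [this, ← hI0, Real.zero_rpow hm0', mul_zero]
          exact tendsto_const_nhds
        · have hcI : (0:ℝ) < c * I ω := mul_pos hc hI0
          have hcomp : Tendsto (fun θ : ℝ => θ * c * I ω)
              (nhdsWithin 0 (Set.Ioi 0)) (nhdsWithin 0 (Set.Ioi 0)) := by
            apply tendsto_nhdsWithin_of_tendsto_nhds_of_eventually_within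
            · have : Tendsto (fun θ : ℝ => θ * c * I ω) (nhds 0) (nhds (0 * c * I ω)) :=
                ((continuous_id.mul continuous_const).mul continuous_const).tendsto 0
              simpa using this.mono_left nhdsWithin_le_nhds
            · filter_upwards [self_mem_nhdsWithin] with θ (hθ : 0 < θ)
              exact mul_pos (mul_pos hθ hc) hI0
          have hlim : Tendsto (fun θ : ℝ => F (θ * c * I ω) / (θ * c * I ω) ^ m * (c * I ω) ^ m)
              (nhdsWithin 0 (Set.Ioi 0)) (nhds (C * (c * I ω) ^ m)) :=
            (hFasymp.comp hcomp).mul_const _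
          have heq : ∀ᶠ θ in nhdsWithin (0:ℝ) (Set.Ioi 0),
              F (θ * c * I ω) / (θ * c * I ω) ^ m * (c * I ω) ^ m
                = F (θ * c * I ω) / θ ^ m := by
            filter_upwards [self_mem_nhdsWithin] with θ (hθ : 0 < θ)
            have h1 : (θ * c * I ω) ^ m = θ ^ m * (c * I ω) ^ m := by
              rw [mul_assoc, Real.mul_rpow hθ.le hcI.le]
            have h2 : (0:ℝ) < θ ^ m := Real.rpow_pos_of_pos hθ m
            have h3 : (0:ℝ) < (c * I ω) ^ m := Real.rpow_pos_of_pos hcI m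
            rw [h1]
            field_simp
          have := hlim.congr' heq
          have hval : C * (c * I ω) ^ m = C * c ^ m * I ω ^ m := by
            rw [Real.mul_rpow hc.le (hInonneg ω), mul_assoc]
          rwa [hval] at this
    have hInt : ∫ ω, C * c ^ m * I ω ^ m = C * c ^ m * ∫ ω, I ω ^ m := by
      rw [← integral_const_mul]
    rw [hInt] at key
    apply key.congr'
    filter_upwards [self_mem_nhdsWithin] with θ (hθ : 0 < θ)
    rw [integral_div]
  refine ⟨part1, ?_⟩
  -- choose t₀ with positive probability of I ≥ t₀
  obtain ⟨t₀, ht₀, hpB⟩ : ∃ t₀ : ℝ, 0 < t₀ ∧ (ℙ : Measure Ω) {ω | t₀ ≤ I ω} ≠ 0 := by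
    by_contra hcon
    push_neg at hcon
    have hzero : ∀ n : ℕ, (ℙ : Measure Ω) {ω | 1 / (n + 1 : ℝ) ≤ I ω} = 0 := fun n =>
      hcon (1 / (n + 1 : ℝ)) (by positivity)
    have hsub : {ω | 0 < I ω} ⊆ ⋃ n : ℕ, {ω | 1 / (n + 1 : ℝ) ≤ I ω} := by
      intro ω hω
      obtain ⟨n, hn⟩ := exists_nat_one_div_lt (show (0:ℝ) < I ω from hω)
      exact Set.mem_iUnion.mpr ⟨n, hn.le⟩
    have : (ℙ : Measure Ω) {ω | 0 < I ω} = 0 :=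
      measure_mono_null hsub (by rw [measure_iUnion_null_iff]; exact hzero)
    rw [this] at hIpos; simp at hIpos
  set p : ℝ := ((ℙ : Measure Ω) {ω | t₀ ≤ I ω}).toReal with hpdef
  have hppos : 0 < p := ENNReal.toReal_pos hpB (measure_ne_top _ _)
  have hple1 : p ≤ 1 := by
    have := ENNReal.toReal_mono (by simp) (prob_le_one (μ := (ℙ : Measure Ω))
      (s := {ω | t₀ ≤ I ω}))
    simpa using this
  -- lower bound constant
  obtain ⟨δ', hδ', hδ'bound⟩ : ∃ δ' > 0, ∀ t : ℝ, 0 < t → t < δ' → C / 2 < F t / t ^ m := by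
    have hmem : {t : ℝ | C / 2 < F t / t ^ m} ∈ nhdsWithin (0:ℝ) (Set.Ioi 0) :=
      hFasymp.eventually (lt_mem_nhds (by linarith : C / 2 < C))
    obtain ⟨u, hu, hsub⟩ := mem_nhdsGT_iff_exists_Ioo_subset.mp hmem
    exact ⟨u, hu, fun t ht htu => hsub ⟨ht, htu⟩⟩
  -- upper bound via product measure
  have hupper : ∀ θ : ℝ, 0 < θ →
      ((ℙ : Measure Ω) {ω | h ω < θ * c * I ω}).toReal
        ≤ K * c ^ m * (∫ ω, I ω ^ m) * θ ^ m := by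
    intro θ hθ
    set a : ℝ := θ * c with hadef
    have ha : 0 < a := mul_pos hθ hc
    set ν : Measure ℝ := Measure.map I ℙ with hνdef
    set μ : Measure ℝ := Measure.map h ℙ with hμdef
    have hjoint : Measure.map (fun ω => (I ω, h ω)) ℙ = ν.prod μ :=
      (indepFun_iff_map_prod_eq_prod_map_map hImeas.aemeasurable
        hhmeas.aemeasurable).mp hindep.symm
    have hsmeas : MeasurableSet {p : ℝ × ℝ | p.2 < a * p.1} :=
      measurableSet_lt measurable_snd (measurable_const.mul measurable_fst)
    have hstep1 : (ℙ : Measure Ω) {ω | h ω < θ * c * I ω}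
        = (ν.prod μ) {p : ℝ × ℝ | p.2 < a * p.1} := by
      rw [← hjoint, Measure.map_apply (hImeas.prodMk hhmeas) hsmeas]
      congr 1
    have hstep2 : (ν.prod μ) {p : ℝ × ℝ | p.2 < a * p.1}
        = ∫⁻ y, μ {x | x < a * y} ∂ν := by
      rw [Measure.prod_apply hsmeas]
      rfl
    have hae : ∀ᵐ y ∂ν, 0 ≤ y := by
      rw [hνdef]
      exact (ae_map_iff hImeas.aemeasurable
        (measurableSet_le measurable_const measurable_id)).mpr
        (Filter.Eventually.of_forall hInonneg)
    have hmono : ∫⁻ y, μ {x | x < a * y} ∂ν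
        ≤ ∫⁻ y, ENNReal.ofReal (K * a ^ m) * ENNReal.ofReal (y ^ m) ∂ν := by
      apply lintegral_mono_ae
      filter_upwards [hae] with y hy
      have h1 : μ {x | x < a * y} ≤ μ {x | x ≤ a * y} :=
        measure_mono (Set.setOf_subset_setOf.mpr (fun x => le_of_lt))
      have h2 : μ {x | x ≤ a * y} = (ℙ : Measure Ω) {ω | h ω ≤ a * y} := by
        have h2' : (Measure.map h ℙ) (Set.Iic (a * y))
            = (ℙ : Measure Ω) (h ⁻¹' Set.Iic (a * y)) :=
          Measure.map_apply hhmeas measurableSet_Iic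
        rw [hμdef]
        exact h2'
      have h3 : (ℙ : Measure Ω) {ω | h ω ≤ a * y} = ENNReal.ofReal (F (a * y)) := by
        rw [hF (a * y), ENNReal.ofReal_toReal (measure_ne_top _ _)]
      have h4 : F (a * y) ≤ K * a ^ m * y ^ m := by
        have := hKbound (a * y) (mul_nonneg ha.le hy)
        rwa [Real.mul_rpow ha.le hy, ← mul_assoc] at this
      calc μ {x | x < a * y} ≤ μ {x | x ≤ a * y} := h1
        _ = ENNReal.ofReal (F (a * y)) := by rw [h2, h3]
        _ ≤ ENNReal.ofReal (K * a ^ m * y ^ m) := ENNReal.ofReal_le_ofReal h4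
        _ = ENNReal.ofReal (K * a ^ m) * ENNReal.ofReal (y ^ m) := by
            rw [ENNReal.ofReal_mul (mul_nonneg hKpos.le (Real.rpow_nonneg ha.le m))]
    have hmeasrpow : Measurable fun y : ℝ => ENNReal.ofReal (y ^ m) :=
      ENNReal.measurable_ofReal.comp
        ((continuous_id.rpow_const (fun _ => Or.inr hm0.le)).measurable)
    have hconst : ∫⁻ y, ENNReal.ofReal (K * a ^ m) * ENNReal.ofReal (y ^ m) ∂ν
        = ENNReal.ofReal (K * a ^ m) * ∫⁻ y, ENNReal.ofReal (y ^ m) ∂ν :=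
      lintegral_const_mul _ hmeasrpow
    have hmap : ∫⁻ y, ENNReal.ofReal (y ^ m) ∂ν = ∫⁻ ω, ENNReal.ofReal (I ω ^ m) ∂ℙ := by
      rw [hνdef, lintegral_map hmeasrpow hImeas]
    have hofReal : ∫⁻ ω, ENNReal.ofReal (I ω ^ m) ∂ℙ = ENNReal.ofReal (∫ ω, I ω ^ m) :=
      (ofReal_integral_eq_lintegral_ofReal hmom
        (Filter.Eventually.of_forall (fun ω => Real.rpow_nonneg (hInonneg ω) m))).symm
    have htotal : (ℙ : Measure Ω) {ω | h ω < θ * c * I ω}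
        ≤ ENNReal.ofReal (K * a ^ m * (∫ ω, I ω ^ m)) := by
      rw [hstep1, hstep2]
      calc ∫⁻ y, μ {x | x < a * y} ∂ν
          ≤ ENNReal.ofReal (K * a ^ m) * ∫⁻ y, ENNReal.ofReal (y ^ m) ∂ν := by
            rw [← hconst]; exact hmono
        _ = ENNReal.ofReal (K * a ^ m) * ENNReal.ofReal (∫ ω, I ω ^ m) := by
            rw [hmap, hofReal]
        _ = ENNReal.ofReal (K * a ^ m * (∫ ω, I ω ^ m)) := by
            rw [ENNReal.ofReal_mul (mul_nonneg hKpos.le (Real.rpow_nonneg ha.le m))]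
    have := ENNReal.toReal_le_of_le_ofReal
      (mul_nonneg (mul_nonneg hKpos.le (Real.rpow_nonneg ha.le m)) hEnonneg) htotal
    calc ((ℙ : Measure Ω) {ω | h ω < θ * c * I ω}).toReal
        ≤ K * a ^ m * (∫ ω, I ω ^ m) := this
      _ = K * c ^ m * (∫ ω, I ω ^ m) * θ ^ m := by
          rw [hadef, Real.mul_rpow hθ.le hc.le]; ring
  -- assemble Part 2
  refine ⟨C / 2 * (c * t₀ / 2) ^ m * p, K * c ^ m * (∫ ω, I ω ^ m) + 1, ?_, ?_, ?_⟩
  · exact mul_pos (mul_pos (by linarith) (Real.rpow_pos_of_pos (by positivity) m)) hppos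
  · have : 0 ≤ K * c ^ m * (∫ ω, I ω ^ m) :=
      mul_nonneg (mul_nonneg hKpos.le (Real.rpow_nonneg hc.le m)) hEnonneg
    linarith
  · have hmem : Set.Ioo (0:ℝ) (2 * δ' / (c * t₀)) ∈ nhdsWithin (0:ℝ) (Set.Ioi 0) :=
      Ioo_mem_nhdsGT_of_mem ⟨le_refl 0, by positivity⟩
    filter_upwards [hmem] with θ hθ
    obtain ⟨hθ0, hθδ⟩ := hθ
    have hθm : (0:ℝ) < θ ^ m := Real.rpow_pos_of_pos hθ0 m
    constructor
    · -- lower bound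
      set t : ℝ := θ * c * t₀ / 2 with htdef
      have ht0 : 0 < t := by positivity
      have htδ' : t < δ' := by
        have h1 : θ * (c * t₀ / 2) < (2 * δ' / (c * t₀)) * (c * t₀ / 2) :=
          mul_lt_mul_of_pos_right hθδ (by positivity)
        have h2 : (2 * δ' / (c * t₀)) * (c * t₀ / 2) = δ' := by
          field_simp
        have h3 : t = θ * (c * t₀ / 2) := by rw [htdef]; ring
        rw [h3, ← h2]; exact h1
      have hFt : C / 2 * t ^ m ≤ F t := by
        have := (hδ'bound t ht0 htδ').le
        rw [le_div_iff₀ (Real.rpow_pos_of_pos ht0 m)] at this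
        linarith
      -- independence of events
      have hAB : (ℙ : Measure Ω) (h ⁻¹' Set.Iic t ∩ I ⁻¹' Set.Ici t₀)
          = (ℙ : Measure Ω) (h ⁻¹' Set.Iic t) * (ℙ : Measure Ω) (I ⁻¹' Set.Ici t₀) :=
        hindep.measure_inter_preimage_eq_mul _ _ measurableSet_Iic measurableSet_Ici
      have hsub : h ⁻¹' Set.Iic t ∩ I ⁻¹' Set.Ici t₀ ⊆ {ω | h ω < θ * c * I ω} := by
        rintro ω ⟨h1, h2⟩
        simp only [Set.mem_preimage, Set.mem_Iic, Set.mem_Ici] at h1 h2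
        simp only [Set.mem_setOf_eq]
        have : t < θ * c * t₀ := by
          rw [htdef]
          have : 0 < θ * c * t₀ := by positivity
          linarith
        calc h ω ≤ t := h1
          _ < θ * c * t₀ := this
          _ ≤ θ * c * I ω := by
              apply mul_le_mul_of_nonneg_left h2 (by positivity)
      have hPle : (ℙ : Measure Ω) (h ⁻¹' Set.Iic t ∩ I ⁻¹' Set.Ici t₀)
          ≤ (ℙ : Measure Ω) {ω | h ω < θ * c * I ω} := measure_mono hsub
      have hPre : (ℙ : Measure Ω) (h ⁻¹' Set.Iic t) = (ℙ : Measure Ω) {ω | h ω ≤ t} := rfl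
      have hPre2 : (ℙ : Measure Ω) (I ⁻¹' Set.Ici t₀) = (ℙ : Measure Ω) {ω | t₀ ≤ I ω} := rfl
      have htR : ((ℙ : Measure Ω) (h ⁻¹' Set.Iic t ∩ I ⁻¹' Set.Ici t₀)).toReal
          = F t * p := by
        rw [hAB, ENNReal.toReal_mul, hPre, hPre2, hF t, hpdef]
      have hmonoR : ((ℙ : Measure Ω) (h ⁻¹' Set.Iic t ∩ I ⁻¹' Set.Ici t₀)).toReal
          ≤ ((ℙ : Measure Ω) {ω | h ω < θ * c * I ω}).toReal :=
        ENNReal.toReal_mono (measure_ne_top _ _) hPle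
      have htm : t ^ m = (c * t₀ / 2) ^ m * θ ^ m := by
        rw [htdef]
        have : θ * c * t₀ / 2 = θ * (c * t₀ / 2) := by ring
        rw [this, Real.mul_rpow hθ0.le (by positivity)]
        ring
      calc C / 2 * (c * t₀ / 2) ^ m * p * θ ^ m
          = (C / 2 * t ^ m) * p := by rw [htm]; ring
        _ ≤ F t * p := by
            apply mul_le_mul_of_nonneg_right hFt hppos.le
        _ = ((ℙ : Measure Ω) (h ⁻¹' Set.Iic t ∩ I ⁻¹' Set.Ici t₀)).toReal := htR.symm
        _ ≤ _ := hmonoR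
    · -- upper bound
      calc ((ℙ : Measure Ω) {ω | h ω < θ * c * I ω}).toReal
          ≤ K * c ^ m * (∫ ω, I ω ^ m) * θ ^ m := hupper θ hθ0
        _ ≤ (K * c ^ m * (∫ ω, I ω ^ m) + 1) * θ ^ m := by nlinarith
end

section
/- Let h_0, h_1 be i.i.d. Gamma(m, 1/m) random variables with m ≥ 1. Then lim_{θ → ∞} θ^m P(h_0 / h_1 > θ) = Γ(2m) / (m Γ(m)^2); in particular P(h_0/h_1 > θ) = Θ(θ^{-m}) as θ → ∞. -/
/-!
Conditioning on `h₀ = x`, independence gives `P(h₀ / h₁ > θ) = ∫ F (x / θ) dγ(x)`, where `γ` is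
the Gamma(a, r) law and `F` its CDF. On `[0, u]` the density lies between
`C y^(a-1) e^(-r u)` and `C y^(a-1)` with `C = r^a / Γ(a)`, so `θ^a F (x / θ)` is squeezed to
`C x^a / a` and is dominated by it. Dominated convergence and the moment
`∫ x^a dγ = Γ(2a) / (Γ(a) r^a)` give the limit `Γ(2a) / (a Γ(a)^2)`; since it is positive,
the probability is of exact order `θ^(-a)`.
-/

open MeasureTheory ProbabilityTheory Real Filter Set Topology

lemma rpow_mul_rpow_div_cancel (a : ℝ) {θ x : ℝ} (hθ : 0 < θ) (hx : 0 ≤ x) :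
    θ ^ a * (x / θ) ^ a = x ^ a := by
  rw [← mul_rpow hθ.le (div_nonneg hx hθ.le), mul_div_cancel₀ _ hθ.ne']

namespace ProbabilityTheory

variable {a r : ℝ}

lemma gammaPDFReal_of_nonneg {x : ℝ} (hx : 0 ≤ x) :
    gammaPDFReal a r x = r ^ a / Gamma a * x ^ (a - 1) * exp (-(r * x)) := if_pos hx

lemma ae_pos_gammaMeasure : ∀ᵐ x ∂gammaMeasure a r, 0 < x := by
  rw [gammaMeasure,
    ae_withDensity_iff (f := gammaPDF a r) (measurable_gammaPDFReal a r).ennreal_ofReal]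
  filter_upwards [compl_mem_ae_iff.2 (measure_singleton (0 : ℝ))] with x hx0 hx
  exact lt_of_le_of_ne (not_lt.1 (mt gammaPDF_of_neg hx)) (Ne.symm hx0)

lemma integrable_gammaPDFReal (ha : 0 < a) (hr : 0 < r) : Integrable (gammaPDFReal a r) := by
  refine ⟨(measurable_gammaPDFReal a r).aestronglyMeasurable, ?_⟩
  rw [hasFiniteIntegral_iff_ofReal (ae_of_all _ (gammaPDFReal_nonneg ha hr))]
  exact (lintegral_gammaPDF_eq_one ha hr).trans_lt ENNReal.one_lt_top

lemma cdf_gammaMeasure_eq_intervalIntegral (ha : 0 < a) (hr : 0 < r) {u : ℝ} (hu : 0 ≤ u) :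
    cdf (gammaMeasure a r) u = ∫ y in 0..u, gammaPDFReal a r y := by
  rw [cdf_gammaMeasure_eq_integral ha hr, intervalIntegral.integral_of_le hu,
    ← integral_Icc_eq_integral_Ioc,
    setIntegral_eq_of_subset_of_forall_sdiff_eq_zero measurableSet_Iic Icc_subset_Iic_self]
  rintro y ⟨hyu, hy⟩
  exact if_neg fun h => hy ⟨h, hyu⟩

lemma intervalIntegral_rpow_sub_one (ha : 0 < a) (u : ℝ) :
    ∫ y in 0..u, y ^ (a - 1) = u ^ a / a := by
  rw [integral_rpow (Or.inl (by linarith)), sub_add_cancel, zero_rpow ha.ne', sub_zero]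

lemma cdf_gammaMeasure_le (ha : 0 < a) (hr : 0 < r) {u : ℝ} (hu : 0 ≤ u) :
    cdf (gammaMeasure a r) u ≤ r ^ a / Gamma a * (u ^ a / a) := by
  rw [cdf_gammaMeasure_eq_intervalIntegral ha hr hu, ← intervalIntegral_rpow_sub_one ha,
    ← intervalIntegral.integral_const_mul]
  refine intervalIntegral.integral_mono_on hu (integrable_gammaPDFReal ha hr).intervalIntegrable
    ((intervalIntegral.intervalIntegrable_rpow' (by linarith)).const_mul _) fun y hy => ?_
  rw [gammaPDFReal_of_nonneg hy.1]
  have : 0 ≤ y ^ (a - 1) := rpow_nonneg hy.1 _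
  exact mul_le_of_le_one_right (by positivity)
    (exp_le_one_iff.2 (neg_nonpos.2 (mul_nonneg hr.le hy.1)))

lemma le_cdf_gammaMeasure (ha : 0 < a) (hr : 0 < r) {u : ℝ} (hu : 0 ≤ u) :
    r ^ a / Gamma a * (u ^ a / a) * exp (-(r * u)) ≤ cdf (gammaMeasure a r) u := by
  rw [cdf_gammaMeasure_eq_intervalIntegral ha hr hu, ← intervalIntegral_rpow_sub_one ha,
    ← intervalIntegral.integral_const_mul, ← intervalIntegral.integral_mul_const]
  refine intervalIntegral.integral_mono_on hu
    (((intervalIntegral.intervalIntegrable_rpow' (by linarith)).const_mul _).mul_const _)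
    (integrable_gammaPDFReal ha hr).intervalIntegrable fun y hy => ?_
  rw [gammaPDFReal_of_nonneg hy.1]
  have : 0 ≤ y ^ (a - 1) := rpow_nonneg hy.1 _
  gcongr
  exact hy.2

lemma rpow_mul_cdf_gammaMeasure_div_le (ha : 0 < a) (hr : 0 < r) {θ x : ℝ} (hθ : 0 < θ)
    (hx : 0 ≤ x) : θ ^ a * cdf (gammaMeasure a r) (x / θ) ≤ r ^ a / Gamma a * (x ^ a / a) := by
  have hscale := rpow_mul_rpow_div_cancel a hθ hx
  calc θ ^ a * cdf (gammaMeasure a r) (x / θ)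
      ≤ θ ^ a * (r ^ a / Gamma a * ((x / θ) ^ a / a)) := by
        gcongr; exact cdf_gammaMeasure_le ha hr (div_nonneg hx hθ.le)
    _ = r ^ a / Gamma a * (x ^ a / a) := by rw [← hscale]; ring

lemma le_rpow_mul_cdf_gammaMeasure_div (ha : 0 < a) (hr : 0 < r) {θ x : ℝ} (hθ : 0 < θ)
    (hx : 0 ≤ x) :
    r ^ a / Gamma a * (x ^ a / a) * exp (-(r * (x / θ))) ≤
      θ ^ a * cdf (gammaMeasure a r) (x / θ) := by
  have hscale := rpow_mul_rpow_div_cancel a hθ hx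
  calc r ^ a / Gamma a * (x ^ a / a) * exp (-(r * (x / θ)))
      = θ ^ a * (r ^ a / Gamma a * ((x / θ) ^ a / a) * exp (-(r * (x / θ)))) := by
        rw [← hscale]; ring
    _ ≤ θ ^ a * cdf (gammaMeasure a r) (x / θ) := by
        gcongr; exact le_cdf_gammaMeasure ha hr (div_nonneg hx hθ.le)

lemma tendsto_rpow_mul_cdf_gammaMeasure_div (ha : 0 < a) (hr : 0 < r) {x : ℝ} (hx : 0 ≤ x) :
    Tendsto (fun θ => θ ^ a * cdf (gammaMeasure a r) (x / θ)) atTop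
      (𝓝 (r ^ a / Gamma a * (x ^ a / a))) := by
  have hexp : Tendsto (fun θ => exp (-(r * (x / θ)))) atTop (𝓝 1) := by
    have := ((tendsto_const_nhds (x := x)).div_atTop tendsto_id).const_mul r |>.neg.rexp
    simpa using this
  have hlower := hexp.const_mul (r ^ a / Gamma a * (x ^ a / a))
  rw [mul_one] at hlower
  refine tendsto_of_tendsto_of_tendsto_of_le_of_le' hlower tendsto_const_nhds ?_ ?_
  · filter_upwards [eventually_gt_atTop 0] with θ hθ
    exact le_rpow_mul_cdf_gammaMeasure_div ha hr hθ hx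
  · filter_upwards [eventually_gt_atTop 0] with θ hθ
    exact rpow_mul_cdf_gammaMeasure_div_le ha hr hθ hx

lemma integral_gammaMeasure (ha : 0 < a) (hr : 0 < r) (g : ℝ → ℝ) :
    ∫ x, g x ∂gammaMeasure a r = ∫ x in Ioi 0, gammaPDFReal a r x * g x := by
  rw [gammaMeasure, integral_withDensity_eq_integral_toReal_smul
    (f := gammaPDF a r) (measurable_gammaPDFReal a r).ennreal_ofReal
    (ae_of_all _ fun _ => ENNReal.ofReal_lt_top), ← integral_Ici_eq_integral_Ioi,
    ← setIntegral_eq_integral_of_forall_compl_eq_zero]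
  · refine setIntegral_congr_fun measurableSet_Ici fun x _ => ?_
    rw [gammaPDF, ENNReal.toReal_ofReal (gammaPDFReal_nonneg ha hr x), smul_eq_mul]
  · intro x hx
    rw [gammaPDF_of_neg (not_le.1 hx), ENNReal.toReal_zero, zero_smul]

lemma integral_rpow_gammaMeasure (ha : 0 < a) (hr : 0 < r) {p : ℝ} (hp : 0 < a + p) :
    ∫ x, x ^ p ∂gammaMeasure a r = Gamma (a + p) / (Gamma a * r ^ p) := by
  have hdensity : ∀ x ∈ Ioi (0 : ℝ), gammaPDFReal a r x * x ^ p =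
      r ^ a / Gamma a * (x ^ (a + p - 1) * exp (-(r * x))) := fun x hx => by
    rw [gammaPDFReal_of_nonneg (le_of_lt hx), show a + p - 1 = a - 1 + p by ring,
      rpow_add hx]
    ring
  rw [integral_gammaMeasure ha hr, setIntegral_congr_fun measurableSet_Ioi hdensity,
    integral_const_mul, integral_rpow_mul_exp_neg_mul_Ioi hp hr, div_rpow zero_le_one hr.le,
    one_rpow, rpow_add hr]
  have := Gamma_pos_of_pos ha
  field_simp

lemma integrable_rpow_gammaMeasure (ha : 0 < a) (hr : 0 < r) {p : ℝ} (hp : 0 < a + p) :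
    Integrable (fun x => x ^ p) (gammaMeasure a r) := by
  -- A non-integrable function has integral `0`, and the moment computed above is positive.
  refine .of_integral_ne_zero ?_
  rw [integral_rpow_gammaMeasure ha hr hp]
  have := Gamma_pos_of_pos ha
  have := Gamma_pos_of_pos hp
  positivity

instance : NullSingletonClass (gammaMeasure a r) := by
  unfold gammaMeasure; infer_instance

lemma toReal_gammaMeasure_lt_div (ha : 0 < a) (hr : 0 < r) {θ : ℝ} (hθ : 0 < θ) (x : ℝ) :
    (gammaMeasure a r {y | θ < x / y}).toReal = cdf (gammaMeasure a r) (x / θ) := by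
  have := isProbabilityMeasure_gammaMeasure ha hr
  have hslice : {y | θ < x / y} =ᵐ[gammaMeasure a r] Iio (x / θ) :=
    eventuallyEq_set.2 <| ae_pos_gammaMeasure.mono fun y hy => by
      rw [mem_ofPred_eq, mem_Iio, lt_div_iff₀ hy, lt_div_iff₀' hθ]
  rw [cdf_eq_real, measureReal_def, measure_congr (hslice.trans Iio_ae_eq_Iic)]

lemma IndepFun.toReal_measure_mem_eq_integral {Ω α β : Type*}
    {mΩ : MeasurableSpace Ω} [MeasurableSpace α] [MeasurableSpace β] {P : Measure Ω}
    [IsFiniteMeasure P] {X : Ω → α} {Y : Ω → β} (hX : Measurable X) (hY : Measurable Y)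
    (hXY : IndepFun X Y P) {S : Set (α × β)} (hS : MeasurableSet S) :
    (P {ω | (X ω, Y ω) ∈ S}).toReal = ∫ x, ((P.map Y) (Prod.mk x ⁻¹' S)).toReal ∂(P.map X) := by
  rw [integral_toReal (measurable_measure_prodMk_left hS).aemeasurable
    (ae_of_all _ fun _ => measure_lt_top _ _), ← Measure.prod_apply hS,
    ← hXY.map_prod_eq_prod_map_map hX.aemeasurable hY.aemeasurable,
    Measure.map_apply (hX.prodMk hY) hS]
  rfl

end ProbabilityTheory

open ProbabilityTheory

lemma exists_pos_bounds_rpow_neg_of_tendsto_rpow_mul {f : ℝ → ℝ} {m L : ℝ} (hL : 0 < L)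
    (hf : Tendsto (fun θ => θ ^ m * f θ) atTop (𝓝 L)) :
    ∃ c₁ c₂ : ℝ, 0 < c₁ ∧ 0 < c₂ ∧
      ∀ᶠ θ in atTop, c₁ * θ ^ (-m) ≤ f θ ∧ f θ ≤ c₂ * θ ^ (-m) := by
  refine ⟨L / 2, 2 * L, by positivity, by positivity, ?_⟩
  filter_upwards [hf.eventually_const_lt (by linarith : L / 2 < L),
    hf.eventually_lt_const (by linarith : L < 2 * L), eventually_gt_atTop 0] with θ hlow hup hθ
  have hθm : 0 < θ ^ m := rpow_pos_of_pos hθ m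
  rw [rpow_neg hθ.le, ← div_eq_mul_inv, ← div_eq_mul_inv, div_le_iff₀ hθm, le_div_iff₀ hθm]
  constructor <;> linarith

theorem tendsto_rpow_mul_measure_lt_div_of_gammaMeasure {Ω : Type*} [MeasureSpace Ω]
    [IsProbabilityMeasure (ℙ : Measure Ω)] {a r : ℝ} (ha : 0 < a) (hr : 0 < r) {X Y : Ω → ℝ}
    (hX : Measurable X) (hY : Measurable Y) (hXlaw : Measure.map X ℙ = gammaMeasure a r)
    (hYlaw : Measure.map Y ℙ = gammaMeasure a r) (hXY : IndepFun X Y ℙ) :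
    Tendsto (fun θ => θ ^ a * (ℙ {ω | θ < X ω / Y ω}).toReal) atTop
      (𝓝 (Gamma (2 * a) / (a * Gamma a ^ 2))) := by
  have hprob : ∀ θ > 0,
      (ℙ {ω | θ < X ω / Y ω}).toReal = ∫ x, cdf (gammaMeasure a r) (x / θ) ∂gammaMeasure a r := by
    intro θ hθ
    calc (ℙ {ω | θ < X ω / Y ω}).toReal
        = ∫ x, (Measure.map Y ℙ {y | θ < x / y}).toReal ∂Measure.map X ℙ :=
          hXY.toReal_measure_mem_eq_integral hX hY
            (measurableSet_lt measurable_const (measurable_fst.div measurable_snd))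
      _ = ∫ x, cdf (gammaMeasure a r) (x / θ) ∂gammaMeasure a r := by
          simp only [hXlaw, hYlaw, toReal_gammaMeasure_lt_div ha hr hθ]
  have hdct : Tendsto (fun θ => ∫ x, θ ^ a * cdf (gammaMeasure a r) (x / θ) ∂gammaMeasure a r)
      atTop (𝓝 (∫ x, r ^ a / Gamma a * (x ^ a / a) ∂gammaMeasure a r)) := by
    refine tendsto_integral_filter_of_dominated_convergence (fun x => r ^ a / Gamma a * (x ^ a / a))
      (.of_forall fun θ => (((cdf _).mono.measurable.comp (measurable_id.div_const θ)).const_mul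
        _).aestronglyMeasurable) ?_
      (((integrable_rpow_gammaMeasure ha hr (by linarith)).div_const a).const_mul (r ^ a / Gamma a))
      (ae_pos_gammaMeasure.mono fun x hx => tendsto_rpow_mul_cdf_gammaMeasure_div ha hr hx.le)
    filter_upwards [eventually_gt_atTop 0] with θ hθ
    filter_upwards [ae_pos_gammaMeasure] with x hx
    rw [Real.norm_of_nonneg (mul_nonneg (rpow_nonneg hθ.le a) (cdf_nonneg _ _))]
    exact rpow_mul_cdf_gammaMeasure_div_le ha hr hθ hx.le
  have hlimit : ∫ x, r ^ a / Gamma a * (x ^ a / a) ∂gammaMeasure a r =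
      Gamma (2 * a) / (a * Gamma a ^ 2) := by
    rw [integral_const_mul, integral_div, integral_rpow_gammaMeasure ha hr (by linarith), ← two_mul]
    have := Gamma_pos_of_pos ha
    field_simp
  refine (hlimit ▸ hdct).congr' ?_
  filter_upwards [eventually_gt_atTop 0] with θ hθ
  rw [integral_const_mul, hprob θ hθ]

/-- For i.i.d. h₀, h₁ ~ Gamma(m, rate m), m ≥ 1:
    lim_{θ→∞} θ^m P(h₀/h₁ > θ) = Γ(2m)/(m Γ(m)²); in particular Θ(θ^{-m}). -/
theorem stmt_16 {Ω : Type*} [MeasureSpace Ω] [IsProbabilityMeasure (ℙ : Measure Ω)]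
    (m : ℝ) (hm : 1 ≤ m)
    (h₀ h₁ : Ω → ℝ) (hmeas₀ : Measurable h₀) (hmeas₁ : Measurable h₁)
    (hdist₀ : Measure.map h₀ ℙ = gammaMeasure m m)
    (hdist₁ : Measure.map h₁ ℙ = gammaMeasure m m)
    (hindep : IndepFun h₀ h₁ ℙ) :
    Tendsto (fun θ : ℝ => θ ^ m * (ℙ {ω | θ < h₀ ω / h₁ ω}).toReal) atTop
        (nhds (Real.Gamma (2 * m) / (m * Real.Gamma m ^ 2))) ∧
      ∃ c₁ c₂ : ℝ, 0 < c₁ ∧ 0 < c₂ ∧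
        ∀ᶠ θ : ℝ in atTop,
          c₁ * θ ^ (-m) ≤ (ℙ {ω | θ < h₀ ω / h₁ ω}).toReal ∧
            (ℙ {ω | θ < h₀ ω / h₁ ω}).toReal ≤ c₂ * θ ^ (-m) := by
  have hm₀ : 0 < m := by linarith
  have hlimit := tendsto_rpow_mul_measure_lt_div_of_gammaMeasure hm₀ hm₀ hmeas₀ hmeas₁
    hdist₀ hdist₁ hindep
  have hpos : 0 < Real.Gamma (2 * m) / (m * Real.Gamma m ^ 2) := by
    have := Gamma_pos_of_pos hm₀
    have := Gamma_pos_of_pos (by linarith : 0 < 2 * m)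
    positivity
  exact ⟨hlimit, exists_pos_bounds_rpow_neg_of_tendsto_rpow_mul hpos hlimit⟩
end

section
/- Let X be a nonnegative random variable with P(X > y) ~ A y^{-δ} as y → ∞, for constants A > 0, 0 < δ < 1, and let h be a positive random variable independent of X with E[h^δ] < ∞, E[h^{-δ}] < ∞. Suppose additionally P(h < θ h') = O(θ) as θ → 0 for an independent copy h' of h. Then for constants a, b > 0, P(h a / (h' b + X) < θ) ~ A a^{-δ} E[h^{-δ}] θ^δ as θ → 0+, where h' is independent of (h, X). -/
/-!
Write `F(y) = P(X > y)`. Conditioning on `(h, h')` and splitting according to whether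
`2θ h' b ≤ h a`, the probability is
`E[F(h a/θ - h' b); 2θ h' b ≤ h a] + P(X > h a/θ - h' b, h a < 2θ h' b)`.
On the first event `h a/θ - h' b ≥ h a/(2θ)`, so the tail bound `F(y) ≤ C y^{-δ}` dominates the
integrand by a multiple of `h^{-δ}`, and dominated convergence gives the limit
`A a^{-δ} E[h^{-δ}]`. The second term is at most `P(h < (2b/a) θ h') = O(θ) = o(θ^δ)`.
-/

open MeasureTheory ProbabilityTheory Real Filter Topology Asymptotics

theorem exists_le_mul_rpow_neg_of_tendsto {F : ℝ → ℝ} {A δ : ℝ} (hδ : 0 ≤ δ)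
    (hF : ∀ y, F y ≤ 1) (hFA : Tendsto (fun y => y ^ δ * F y) atTop (𝓝 A)) :
    ∃ C, ∀ y, 0 < y → F y ≤ C * y ^ (-δ) := by
  obtain ⟨y₀, hy₀⟩ := eventually_atTop.1 (hFA.eventually (eventually_le_nhds (lt_add_one A)))
  set y₁ := max y₀ 1
  refine ⟨max (A + 1) (y₁ ^ δ), fun y hy => ?_⟩
  rw [rpow_neg hy.le, ← div_eq_mul_inv, le_div_iff₀ (rpow_pos_of_pos hy δ)]
  rcases le_or_gt y₁ y with hy₁y | hyy₁
  · calc F y * y ^ δ = y ^ δ * F y := mul_comm _ _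
      _ ≤ A + 1 := hy₀ y (le_trans (le_max_left _ _) hy₁y)
      _ ≤ _ := le_max_left _ _
  · calc F y * y ^ δ ≤ 1 * y₁ ^ δ := by gcongr; exact hF y
      _ ≤ _ := by rw [one_mul]; exact le_max_right _ _

theorem tendsto_comp_div_sub_div_rpow_nhdsGT_zero {F : ℝ → ℝ} {A δ u : ℝ}
    (hFA : Tendsto (fun y => y ^ δ * F y) atTop (𝓝 A)) (hu : 0 < u) (v : ℝ) :
    Tendsto (fun θ => F (u / θ - v) / θ ^ δ) (𝓝[>] 0) (𝓝 (A * u ^ (-δ))) := by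
  have hshift : Tendsto (fun θ => u / θ - v) (𝓝[>] 0) atTop :=
    tendsto_atTop_add_const_right _ (-v) (tendsto_inv_nhdsGT_zero.const_mul_atTop hu)
  have hlin : Tendsto (fun θ : ℝ => u - θ * v) (𝓝[>] 0) (𝓝 u) := by
    have : Tendsto (fun θ : ℝ => u - θ * v) (𝓝 0) (𝓝 (u - 0 * v)) :=
      (continuous_const.sub (continuous_id.mul continuous_const)).tendsto 0
    simpa using this.mono_left nhdsWithin_le_nhds
  refine ((hFA.comp hshift).mul (hlin.rpow_const (Or.inl hu.ne'))).congr' ?_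
  filter_upwards [self_mem_nhdsWithin, hshift.eventually_gt_atTop 0] with θ hθ hy
  have hθ : 0 < θ := hθ
  have hlin_eq : u - θ * v = θ * (u / θ - v) := by field_simp
  rw [Function.comp_apply]
  generalize u / θ - v = y at hy hlin_eq ⊢
  rw [hlin_eq, mul_rpow hθ.le hy.le, rpow_neg hθ.le, rpow_neg hy.le]
  field_simp

theorem comp_div_sub_div_rpow_le {F : ℝ → ℝ} {C δ θ u v : ℝ} (hδ : 0 ≤ δ) (hC : 0 ≤ C)
    (hFC : ∀ y, 0 < y → F y ≤ C * y ^ (-δ)) (hθ : 0 < θ) (hu : 0 < u) (huv : 2 * θ * v ≤ u) :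
    F (u / θ - v) / θ ^ δ ≤ C * 2 ^ δ * u ^ (-δ) := by
  have hhalf : u / (2 * θ) ≤ u / θ - v := by
    rw [div_sub' hθ.ne', div_le_div_iff₀ (by positivity) hθ]; nlinarith
  have hhalf_pos : 0 < u / (2 * θ) := by positivity
  rw [div_le_iff₀ (rpow_pos_of_pos hθ δ)]
  calc F (u / θ - v) ≤ C * (u / θ - v) ^ (-δ) := hFC _ (hhalf_pos.trans_le hhalf)
    _ ≤ C * (u / (2 * θ)) ^ (-δ) :=
        mul_le_mul_of_nonneg_left (rpow_le_rpow_of_nonpos hhalf_pos hhalf (neg_nonpos.2 hδ)) hC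
    _ = C * 2 ^ δ * u ^ (-δ) * θ ^ δ := by
        rw [rpow_neg hhalf_pos.le, div_rpow hu.le (by positivity), mul_rpow zero_le_two hθ.le,
          rpow_neg hu.le]
        field_simp

theorem isLittleO_id_rpow_nhdsGT_zero {δ : ℝ} (hδ : δ < 1) :
    (fun θ : ℝ => θ) =o[𝓝[>] 0] (fun θ => θ ^ δ) := by
  refine (isLittleO_iff_tendsto' (eventually_nhdsWithin_of_forall fun θ (hθ : 0 < θ) h0 =>
    absurd h0 (rpow_pos_of_pos hθ δ).ne')).2 ?_
  have : Tendsto (fun θ : ℝ => θ ^ (1 - δ)) (𝓝[>] 0) (𝓝 0) :=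
    ((continuous_rpow_const (by linarith)).tendsto' 0 0 (zero_rpow (by linarith))).mono_left
      nhdsWithin_le_nhds
  refine this.congr' (eventually_nhdsWithin_of_forall fun θ (hθ : 0 < θ) => ?_)
  rw [rpow_sub hθ, rpow_one]

theorem tendsto_const_mul_nhdsGT_zero {c : ℝ} (hc : 0 < c) :
    Tendsto (fun θ => c * θ) (𝓝[>] 0) (𝓝[>] 0) :=
  tendsto_iff_comap.2 (comap_mulLeft_nhdsGT_zero hc).ge

theorem tendsto_div_rpow_of_le_comp_const_mul {r f : ℝ → ℝ} {c δ : ℝ} (hc : 0 < c) (hδ : δ < 1)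
    (hf : f =O[𝓝[>] 0] fun θ => θ) (hr : ∀ θ, 0 ≤ r θ) (hrf : ∀ θ, r θ ≤ f (c * θ)) :
    Tendsto (fun θ => r θ / θ ^ δ) (𝓝[>] 0) (𝓝 0) := by
  have hr_bigO : r =O[𝓝[>] 0] fun θ => θ :=
    ((IsBigO.of_bound 1 (Eventually.of_forall fun θ => by
      rw [one_mul, Function.comp_apply, norm_of_nonneg (hr θ)]
      exact (hrf θ).trans (le_norm_self _))).trans
      (hf.comp_tendsto (tendsto_const_mul_nhdsGT_zero hc))).trans (isBigO_const_mul_self _ _ _)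
  exact (hr_bigO.trans_isLittleO (isLittleO_id_rpow_nhdsGT_zero hδ)).tendsto_div_nhds_zero

theorem tendsto_integral_indicator_comp_div_sub_div_rpow {Ω : Type*} [MeasurableSpace Ω]
    {μ : Measure Ω} {F : ℝ → ℝ} {A C δ : ℝ} (hδ : 0 ≤ δ) (hF : Measurable F)
    (hF0 : ∀ y, 0 ≤ F y) (hFC : ∀ y, 0 < y → F y ≤ C * y ^ (-δ))
    (hFA : Tendsto (fun y => y ^ δ * F y) atTop (𝓝 A)) {u v : Ω → ℝ} (hu : Measurable u)
    (hv : Measurable v) (hu0 : ∀ᵐ ω ∂μ, 0 < u ω) (hint : Integrable (fun ω => u ω ^ (-δ)) μ) :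
    Tendsto (fun θ => (∫ ω, {ω | 2 * θ * v ω ≤ u ω}.indicator (fun ω => F (u ω / θ - v ω)) ω ∂μ)
      / θ ^ δ) (𝓝[>] 0) (𝓝 (A * ∫ ω, u ω ^ (-δ) ∂μ)) := by
  have hC : 0 ≤ C := by simpa using (hF0 1).trans (hFC 1 one_pos)
  simp_rw [← integral_div, ← integral_const_mul]
  refine tendsto_integral_filter_of_dominated_convergence (fun ω => C * 2 ^ δ * u ω ^ (-δ))
    (Eventually.of_forall fun θ => ?_) ?_ (hint.const_mul _) ?_
  · exact (((hF.comp (by fun_prop)).indicator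
      (measurableSet_le (by fun_prop) hu)).div_const _).aestronglyMeasurable
  · filter_upwards [self_mem_nhdsWithin] with θ (hθ : 0 < θ)
    filter_upwards [hu0] with ω hω
    rw [norm_of_nonneg (div_nonneg (Set.indicator_nonneg (fun _ _ => hF0 _) _)
      (rpow_nonneg hθ.le _))]
    by_cases huv : 2 * θ * v ω ≤ u ω
    · rw [Set.indicator_of_mem (s := {ω | 2 * θ * v ω ≤ u ω}) huv]
      exact comp_div_sub_div_rpow_le hδ hC hFC hθ hω huv
    · rw [Set.indicator_of_notMem (s := {ω | 2 * θ * v ω ≤ u ω}) huv, zero_div]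
      positivity
  · filter_upwards [hu0] with ω hω
    refine (tendsto_comp_div_sub_div_rpow_nhdsGT_zero hFA hω (v ω)).congr' ?_
    have : Tendsto (fun θ : ℝ => 2 * θ * v ω) (𝓝[>] 0) (𝓝 0) := by
      have : Tendsto (fun θ : ℝ => 2 * θ * v ω) (𝓝 0) (𝓝 (2 * 0 * v ω)) :=
        ((continuous_const.mul continuous_id).mul continuous_const).tendsto 0
      simpa using this.mono_left nhdsWithin_le_nhds
    filter_upwards [this.eventually (eventually_le_nhds hω)] with θ huv
    rw [Set.indicator_of_mem (s := {ω | 2 * θ * v ω ≤ u ω}) huv]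

theorem ProbabilityTheory.IndepFun.measure_preimage_pair_eq_lintegral {Ω β γ : Type*}
    [MeasurableSpace Ω] [MeasurableSpace β] [MeasurableSpace γ] {μ : Measure Ω} [IsFiniteMeasure μ]
    {Y : Ω → β} {X : Ω → γ} (hYX : IndepFun Y X μ) (hY : Measurable Y) (hX : Measurable X)
    {S : Set (β × γ)} (hS : MeasurableSet S) :
    μ ((fun ω => (Y ω, X ω)) ⁻¹' S) = ∫⁻ ω, μ.map X (Prod.mk (Y ω) ⁻¹' S) ∂μ := by
  rw [← Measure.map_apply (hY.prodMk hX) hS,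
    (indepFun_iff_map_prod_eq_prod_map_map hY.aemeasurable hX.aemeasurable).1 hYX,
    Measure.prod_apply hS, lintegral_map (measurable_measure_prodMk_left hS) hY]

theorem ProbabilityTheory.IndepFun.measureReal_lt_inter_preimage_eq_integral {Ω β : Type*}
    [MeasurableSpace Ω] [MeasurableSpace β] {μ : Measure Ω} [IsFiniteMeasure μ] {Y : Ω → β}
    {X : Ω → ℝ} (hYX : IndepFun Y X μ) (hY : Measurable Y) (hX : Measurable X) {φ : β → ℝ}
    (hφ : Measurable φ) {D : Set β} (hD : MeasurableSet D) :
    μ.real ({ω | φ (Y ω) < X ω} ∩ Y ⁻¹' D)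
      = ∫ ω, (Y ⁻¹' D).indicator (fun ω => μ.real {ω' | φ (Y ω) < X ω'}) ω ∂μ := by
  have hS : MeasurableSet {q : β × ℝ | φ q.1 < q.2 ∧ q.1 ∈ D} :=
    (measurableSet_lt (hφ.comp measurable_fst) measurable_snd).inter (measurable_fst hD)
  have hslice (y : β) : μ.map X (Prod.mk y ⁻¹' {q : β × ℝ | φ q.1 < q.2 ∧ q.1 ∈ D})
      = D.indicator (fun y => μ {ω' | φ y < X ω'}) y := by
    by_cases hy : y ∈ D
    · rw [Set.indicator_of_mem hy, Measure.map_apply hX (measurable_prodMk_left hS)]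
      congr 1
      ext ω
      simp [hy]
    · simp [hy]
  have hmeas : Measurable (D.indicator fun y => μ {ω' | φ y < X ω'}) := by
    simpa only [hslice] using measurable_measure_prodMk_left (ν := μ.map X) hS
  rw [measureReal_def, show {ω | φ (Y ω) < X ω} ∩ Y ⁻¹' D
      = (fun ω => (Y ω, X ω)) ⁻¹' {q : β × ℝ | φ q.1 < q.2 ∧ q.1 ∈ D} from rfl,
    hYX.measure_preimage_pair_eq_lintegral hY hX hS]
  simp_rw [hslice]
  rw [← integral_toReal (f := fun ω => D.indicator (fun y => μ {ω' | φ y < X ω'}) (Y ω))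
    (hmeas.comp hY).aemeasurable (ae_of_all _ fun ω => ?_)]
  · congr with ω
    by_cases hω : Y ω ∈ D <;> simp [hω, measureReal_def]
  · exact (Set.indicator_le_self _ _ _).trans_lt (measure_lt_top _ _)

theorem div_add_lt_iff_div_sub_lt {u v x θ : ℝ} (hθ : 0 < θ) (hvx : 0 < v + x) :
    u / (v + x) < θ ↔ u / θ - v < x := by
  rw [div_lt_iff₀ hvx, sub_lt_iff_lt_add, div_lt_iff₀ hθ, mul_comm, add_comm]

theorem measureReal_div_add_lt_eq_integral_add {Ω : Type*} [MeasurableSpace Ω] {μ : Measure Ω}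
    [IsFiniteMeasure μ] {u v X : Ω → ℝ} (hu : Measurable u) (hv : Measurable v)
    (hX : Measurable X) (hind : IndepFun (fun ω => (u ω, v ω)) X μ)
    (hvX : ∀ᵐ ω ∂μ, 0 < v ω + X ω) {θ : ℝ} (hθ : 0 < θ) :
    μ.real {ω | u ω / (v ω + X ω) < θ}
      = ∫ ω, {ω | 2 * θ * v ω ≤ u ω}.indicator
          (fun ω => μ.real {ω' | u ω / θ - v ω < X ω'}) ω ∂μ
        + μ.real ({ω | u ω / θ - v ω < X ω} \ {ω | 2 * θ * v ω ≤ u ω}) := by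
  have hevent : {ω | u ω / θ - v ω < X ω} =ᵐ[μ] {ω | u ω / (v ω + X ω) < θ} := by
    rw [eventuallyEq_set]
    filter_upwards [hvX] with ω hω
    exact (div_add_lt_iff_div_sub_lt hθ hω).symm
  rw [← measureReal_congr hevent, ← measureReal_inter_add_sdiff (t := {ω | 2 * θ * v ω ≤ u ω})
    (measurableSet_le (by fun_prop) hu)]
  congr 1
  exact hind.measureReal_lt_inter_preimage_eq_integral (hu.prodMk hv) hX
    (φ := fun p => p.1 / θ - p.2) (by fun_prop) (D := {p | 2 * θ * p.2 ≤ p.1})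
    (measurableSet_le (by fun_prop) (by fun_prop))

theorem stmt_18_general {Ω : Type*} [MeasureSpace Ω] [IsProbabilityMeasure (ℙ : Measure Ω)]
    (A δ a b : ℝ) (hδ0 : 0 < δ) (hδ1 : δ < 1) (ha : 0 < a) (hb : 0 < b)
    (X h h' : Ω → ℝ) (hXmeas : Measurable X) (hhmeas : Measurable h)
    (hh'meas : Measurable h')
    (hXnonneg : ∀ ω, 0 ≤ X ω) (hhpos : ∀ᵐ ω ∂ℙ, 0 < h ω) (hh'pos : ∀ᵐ ω ∂ℙ, 0 < h' ω)
    (htail : Tendsto (fun y : ℝ => y ^ δ * (ℙ {ω | y < X ω}).toReal) atTop (nhds A))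
    (hindep : iIndepFun ![h, h', X] ℙ)
    (hmom₂ : Integrable (fun ω => h ω ^ (-δ)) ℙ)
    (hratio : (fun θ : ℝ => (ℙ {ω | h ω < θ * h' ω}).toReal)
      =O[nhdsWithin 0 (Set.Ioi 0)] (fun θ : ℝ => θ)) :
    Tendsto
      (fun θ : ℝ => (ℙ {ω | h ω * a / (h' ω * b + X ω) < θ}).toReal / θ ^ δ)
      (nhdsWithin 0 (Set.Ioi 0))
      (nhds (A * a ^ (-δ) * ∫ ω, h ω ^ (-δ))) := by
  have hF : Measurable fun y => (ℙ : Measure Ω).real {ω | y < X ω} :=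
    Antitone.measurable fun _ _ hle => measureReal_mono fun ω hω => hle.trans_lt hω
  obtain ⟨C, hC⟩ := exists_le_mul_rpow_neg_of_tendsto hδ0.le (fun _ => measureReal_le_one) htail
  have hu : Measurable fun ω => h ω * a := hhmeas.mul_const a
  have hv : Measurable fun ω => h' ω * b := hh'meas.mul_const b
  have hind : IndepFun (fun ω => (h ω * a, h' ω * b)) X ℙ := by
    have hm : ∀ i, Measurable (![h, h', X] i) := fun i => by fin_cases i <;> assumption
    exact (hindep.indepFun_prodMk hm 0 1 2 (by decide) (by decide)).comp
      ((measurable_fst.mul_const a).prodMk (measurable_snd.mul_const b)) measurable_id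
  have hpow : (fun ω => (h ω * a) ^ (-δ)) =ᵐ[ℙ] fun ω => a ^ (-δ) * h ω ^ (-δ) := by
    filter_upwards [hhpos] with ω hω
    rw [mul_rpow hω.le ha.le, mul_comm]
  have hmain := tendsto_integral_indicator_comp_div_sub_div_rpow hδ0.le hF
    (fun _ => measureReal_nonneg) hC htail hu hv
    (by filter_upwards [hhpos] with ω hω using mul_pos hω ha) ((hmom₂.const_mul _).congr hpow.symm)
  rw [integral_congr_ae hpow, integral_const_mul, ← mul_assoc] at hmain
  have hrem : Tendsto (fun θ => (ℙ : Measure Ω).real ({ω | h ω * a / θ - h' ω * b < X ω} \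
      {ω | 2 * θ * (h' ω * b) ≤ h ω * a}) / θ ^ δ) (𝓝[>] 0) (𝓝 0) :=
    tendsto_div_rpow_of_le_comp_const_mul (by positivity : 0 < 2 * b / a) hδ1 hratio
    (fun _ => measureReal_nonneg) fun θ => measureReal_mono fun ω hω => by
      change h ω < _
      rw [show 2 * b / a * θ * h' ω = 2 * θ * (h' ω * b) / a by ring, lt_div_iff₀ ha]
      exact not_le.1 hω.2
  rw [← add_zero (A * a ^ (-δ) * _)]
  refine (hmain.add hrem).congr' ?_
  filter_upwards [self_mem_nhdsWithin] with θ (hθ : 0 < θ)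
  rw [← add_div, ← measureReal_div_add_lt_eq_integral_add hu hv hXmeas hind
    (by filter_upwards [hh'pos] with ω hω using by positivity [hXnonneg ω]) hθ]
  rfl

/-- Theorem 2 of the paper (abstract form): if P(X > y) ~ A y^{-δ}, h, h' i.i.d.
    positive and independent of X with E[h^δ], E[h^{-δ}] < ∞ and
    P(h < θ h') = O(θ) as θ → 0+, then for a, b > 0,
    P(h a / (h' b + X) < θ) ~ A a^{-δ} E[h^{-δ}] θ^δ as θ → 0+. -/
theorem stmt_18 {Ω : Type*} [MeasureSpace Ω] [IsProbabilityMeasure (ℙ : Measure Ω)]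
    (A δ a b : ℝ) (hA : 0 < A) (hδ0 : 0 < δ) (hδ1 : δ < 1) (ha : 0 < a) (hb : 0 < b)
    (X h h' : Ω → ℝ) (hXmeas : Measurable X) (hhmeas : Measurable h)
    (hh'meas : Measurable h')
    (hXnonneg : ∀ ω, 0 ≤ X ω) (hhpos : ∀ᵐ ω ∂ℙ, 0 < h ω) (hh'pos : ∀ᵐ ω ∂ℙ, 0 < h' ω)
    (htail : Tendsto (fun y : ℝ => y ^ δ * (ℙ {ω | y < X ω}).toReal) atTop (nhds A))
    (hiid : Measure.map h ℙ = Measure.map h' ℙ)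
    (hindep : iIndepFun ![h, h', X] ℙ)
    (hmom₁ : Integrable (fun ω => h ω ^ δ) ℙ)
    (hmom₂ : Integrable (fun ω => h ω ^ (-δ)) ℙ)
    (hratio : (fun θ : ℝ => (ℙ {ω | h ω < θ * h' ω}).toReal)
      =O[nhdsWithin 0 (Set.Ioi 0)] (fun θ : ℝ => θ)) :
    Tendsto
      (fun θ : ℝ => (ℙ {ω | h ω * a / (h' ω * b + X ω) < θ}).toReal / θ ^ δ)
      (nhdsWithin 0 (Set.Ioi 0))
      (nhds (A * a ^ (-δ) * ∫ ω, h ω ^ (-δ))) :=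
  stmt_18_general A δ a b hδ0 hδ1 ha hb X h h' hXmeas hhmeas hh'meas hXnonneg hhpos hh'pos htail
    hindep hmom₂ hratio
end
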